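/- Let n ≥ 1, let a < t be real numbers, let 0 < α ≤ 1, let L : ℝ × ℝⁿ × ℝⁿ × ℝⁿ → ℝ be of class C⁴, and let q : ℝ → ℝⁿ be of class C⁴ on [a,t]. Then for every C⁴ function h : ℝ → ℝⁿ with h(a) = h(t) = 0 and h'(a) = h'(t) = 0, the derivative at ε = 0 of ε ↦ (1/Γ(α)) ∫_a^t L(θ, q(θ)+εh(θ), q'(θ)+εh'(θ), q''(θ)+εh''(θ)) (t−θ)^{α−1} dθ equals (1/Γ(α)) ∫_a^t ⟨ ∂₂L − (d/dθ)∂₃L + (d²/dθ²)∂₄L − ( ((1−α)/(t−θ))(∂₃L − 2(d/dθ)∂₄L) − ((1−α)(2−α)/(t−θ)²) ∂₄L ), h(θ) ⟩ (t−θ)^{α−1} dθ, where each partial derivative of L is evaluated at (θ, q(θ), q'(θ), q''(θ)). -/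

import Mathlib

/-!
Write `w θ = (t - θ)^(α - 1)`. Differentiating under the integral sign (dominated by a multiple of
the integrable weight `w`), the first variation is `∫ (⟪A, h⟫ + ⟪B, h'⟫ + ⟪C, h''⟫) w` with
`A = ∂₂L`, `B = ∂₃L`, `C = ∂₄L` along `q`. Integrating by parts once in the `h'` term and twice in
the `h''` term moves all derivatives onto `w B` and `w C`, and
`(w B)' = w (B' + (1 - α)/(t - θ) B)`,
`(w C)'' = w (C'' + 2 (1 - α)/(t - θ) C' + (1 - α)(2 - α)/(t - θ)² C)`
give the stated integrand. The boundary terms vanish at `a` because `h(a) = h'(a) = 0`, and at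
`t` because `h = O((t - θ)²)` and `h' = O(t - θ)` make them `O((t - θ)^α)`; the same estimates
make the singular coefficients harmless, so both integrands are `O(w)`.
-/

open scoped RealInnerProductSpace Interval
open Set Filter Topology MeasureTheory InnerProductSpace

section PartialGradient

variable {F X : Type*} [NormedAddCommGroup F] [InnerProductSpace ℝ F] [CompleteSpace F]
  [NormedAddCommGroup X] [NormedSpace ℝ X]

noncomputable def partialGradient (L : X → ℝ) (ι : F →L[ℝ] X) (p : X) : F :=
  (toDual ℝ F).symm ((fderiv ℝ L p).comp ι)

theorem inner_partialGradient (L : X → ℝ) (ι : F →L[ℝ] X) (p : X) (v : F) :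
    ⟪partialGradient L ι p, v⟫ = fderiv ℝ L p (ι v) := by
  rw [partialGradient, toDual_symm_apply]
  rfl

theorem ContDiff.partialGradient {k m : WithTop ℕ∞} {L : X → ℝ} (hL : ContDiff ℝ m L)
    (hkm : k + 1 ≤ m) (ι : F →L[ℝ] X) : ContDiff ℝ k (partialGradient L ι) :=
  (toDual ℝ F).symm.contDiff.comp
    (((ContinuousLinearMap.compL ℝ F X ℝ).flip ι).contDiff.comp (hL.fderiv_right hkm))

theorem gradient_comp_eq_partialGradient {L : X → ℝ} {g : F → X} {ι : F →L[ℝ] X} {y : F}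
    (hL : DifferentiableAt ℝ L (g y)) (hg : HasFDerivAt g ι y) :
    gradient (L ∘ g) y = partialGradient L ι (g y) := by
  rw [gradient, (hL.hasFDerivAt.comp y hg).fderiv, partialGradient]

end PartialGradient

namespace Lagrangian

variable {F : Type*} [NormedAddCommGroup F] [InnerProductSpace ℝ F] [CompleteSpace F]

-- `partialGradient L ιᵢ` is the paper's `∂ᵢL`.
abbrev ι₂ : F →L[ℝ] ℝ × F × F × F := .comp (.inr ℝ ℝ _) (.inl ℝ F (F × F))
abbrev ι₃ : F →L[ℝ] ℝ × F × F × F := .comp (.inr ℝ ℝ _) (.comp (.inr ℝ F _) (.inl ℝ F F))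
abbrev ι₄ : F →L[ℝ] ℝ × F × F × F := .comp (.inr ℝ ℝ _) (.comp (.inr ℝ F _) (.inr ℝ F F))

variable {L : ℝ × F × F × F → ℝ}

theorem gradient_eq_partialGradient₂ (hL : Differentiable ℝ L) (θ : ℝ) (x v w : F) :
    gradient (fun y => L (θ, y, v, w)) x = partialGradient L ι₂ (θ, x, v, w) :=
  gradient_comp_eq_partialGradient (g := fun y => (θ, y, v, w)) (hL _)
    ((hasFDerivAt_prodMk_right θ _).comp x (hasFDerivAt_prodMk_left x (v, w)))

theorem gradient_eq_partialGradient₃ (hL : Differentiable ℝ L) (θ : ℝ) (x v w : F) :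
    gradient (fun y => L (θ, x, y, w)) v = partialGradient L ι₃ (θ, x, v, w) :=
  gradient_comp_eq_partialGradient (g := fun y => (θ, x, y, w)) (hL _)
    ((hasFDerivAt_prodMk_right θ _).comp v
      ((hasFDerivAt_prodMk_right x _).comp v (hasFDerivAt_prodMk_left v w)))

theorem gradient_eq_partialGradient₄ (hL : Differentiable ℝ L) (θ : ℝ) (x v w : F) :
    gradient (fun y => L (θ, x, v, y)) w = partialGradient L ι₄ (θ, x, v, w) :=
  gradient_comp_eq_partialGradient (g := fun y => (θ, x, v, y)) (hL _)
    ((hasFDerivAt_prodMk_right θ _).comp w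
      ((hasFDerivAt_prodMk_right x _).comp w (hasFDerivAt_prodMk_right v w)))

theorem fderiv_apply_eq_sum_inner_partialGradient (p : ℝ × F × F × F) (u v w : F) :
    fderiv ℝ L p (0, u, v, w) = ⟪partialGradient L ι₂ p, u⟫ + ⟪partialGradient L ι₃ p, v⟫
      + ⟪partialGradient L ι₄ p, w⟫ := by
  have : ((0 : ℝ), u, v, w) = ι₂ u + ι₃ v + ι₄ w := by simp
  rw [this, map_add, map_add, inner_partialGradient, inner_partialGradient,
    inner_partialGradient]

end Lagrangian

theorem hasDerivAt_integral_comp_add_smul_mul {X : Type*} [NormedAddCommGroup X]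
    [NormedSpace ℝ X] {L : X → ℝ} (hL : ContDiff ℝ 1 L) {P H : ℝ → X} {w : ℝ → ℝ} {a b : ℝ}
    (hP : ContinuousOn P [[a, b]]) (hH : ContinuousOn H [[a, b]])
    (hw : IntervalIntegrable w volume a b) :
    HasDerivAt (fun ε : ℝ => ∫ θ in a..b, L (P θ + ε • H θ) * w θ)
      (∫ θ in a..b, fderiv ℝ L (P θ) (H θ) * w θ) 0 := by
  have hmeas : ∀ {f : ℝ → ℝ}, ContinuousOn f [[a, b]] →
      AEStronglyMeasurable (fun θ => f θ * w θ) (volume.restrict (Ι a b)) := fun hf =>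
    ((hf.aestronglyMeasurable measurableSet_uIcc).mono_measure
      (Measure.restrict_mono uIoc_subset_uIcc le_rfl)).mul hw.def'.aestronglyMeasurable
  have hPH : ∀ ε : ℝ, ContinuousOn (fun θ => P θ + ε • H θ) [[a, b]] := fun ε =>
    hP.add (hH.const_smul ε)
  obtain ⟨M, hM⟩ : ∃ M, ∀ p ∈ (fun z : ℝ × ℝ => P z.1 + z.2 • H z.1) '' ([[a, b]] ×ˢ Icc (-1) 1),
      ‖fderiv ℝ L p‖ ≤ M :=
    (isCompact_uIcc.prod isCompact_Icc).image_of_continuousOn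
      ((hP.comp continuousOn_fst fun _ hz => hz.1).add
        (continuousOn_snd.smul (hH.comp continuousOn_fst fun _ hz => hz.1)))
      |>.exists_bound_of_continuousOn (hL.continuous_fderiv one_ne_zero).continuousOn
  obtain ⟨N, hN⟩ := isCompact_uIcc.exists_bound_of_continuousOn hH
  have hderiv : ∀ θ (ε : ℝ), HasDerivAt (fun ε : ℝ => L (P θ + ε • H θ) * w θ)
      (fderiv ℝ L (P θ + ε • H θ) (H θ) * w θ) ε := fun θ ε =>
    (((hL.differentiable one_ne_zero) _).hasFDerivAt.comp_hasDerivAt ε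
      (((hasDerivAt_id ε).smul_const (H θ)).const_add (P θ)) |>.congr_deriv
        (by simp)).mul_const (w θ)
  have hdom := intervalIntegral.hasDerivAt_integral_of_dominated_loc_of_deriv_le
    (bound := fun θ => M * N * ‖w θ‖) (Metric.ball_mem_nhds (0 : ℝ) one_pos)
    (.of_forall fun ε => hmeas (hL.continuous.comp_continuousOn (hPH ε)))
    (hw.continuousOn_mul (hL.continuous.comp_continuousOn (hPH 0)))
    (hmeas (((hL.continuous_fderiv one_ne_zero).comp_continuousOn (hPH 0)).clm_apply hH))
    (.of_forall fun θ hθ ε hε => ?_) (hw.norm.const_mul _)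
    (.of_forall fun θ _ ε _ => hderiv θ ε)
  · simpa using hdom.2
  · have hθ' : θ ∈ [[a, b]] := uIoc_subset_uIcc hθ
    have hε' : ε ∈ Icc (-1 : ℝ) 1 := by
      rw [Metric.mem_ball, Real.dist_0_eq_abs] at hε
      exact abs_le.mp hε.le
    rw [norm_mul]
    gcongr
    calc ‖fderiv ℝ L (P θ + ε • H θ) (H θ)‖
        ≤ ‖fderiv ℝ L (P θ + ε • H θ)‖ * ‖H θ‖ := (fderiv ℝ L _).le_opNorm _
      _ ≤ M * N := mul_le_mul (hM _ ⟨(θ, ε), ⟨hθ', hε'⟩, rfl⟩) (hN θ hθ') (norm_nonneg _)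
          ((norm_nonneg _).trans (hM _ ⟨(θ, ε), ⟨hθ', hε'⟩, rfl⟩))

section Weight

variable {a t p : ℝ}

theorem hasDerivAt_sub_rpow {θ : ℝ} (hθ : θ < t) :
    HasDerivAt (fun s => (t - s) ^ p) (-p / (t - θ) * (t - θ) ^ p) θ := by
  have hpos : 0 < t - θ := sub_pos.mpr hθ
  have h := ((hasDerivAt_id θ).const_sub t).rpow_const (p := p) (Or.inl hpos.ne')
  refine h.congr_deriv ?_
  rw [id_eq, Real.rpow_sub_one hpos.ne']
  ring

theorem intervalIntegrable_sub_rpow (hp : -1 < p) :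
    IntervalIntegrable (fun θ => (t - θ) ^ p) volume a t := by
  simpa using (intervalIntegral.intervalIntegrable_rpow' hp (a := t - a) (b := 0)).comp_sub_left t

theorem intervalIntegrable_mul_sub_rpow {f : ℝ → ℝ} {K : ℝ} (hp : -1 < p) (hat : a ≤ t)
    (hf : ContinuousOn f (Ioo a t)) (hK : ∀ θ ∈ Ioo a t, |f θ| ≤ K) :
    IntervalIntegrable (fun θ => f θ * (t - θ) ^ p) volume a t := by
  rw [intervalIntegrable_iff_integrableOn_Ioo_of_le hat]
  exact ((intervalIntegrable_iff_integrableOn_Ioo_of_le hat).mp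
    (intervalIntegrable_sub_rpow hp)).bdd_mul (hf.aestronglyMeasurable measurableSet_Ioo)
    ((ae_restrict_iff' measurableSet_Ioo).mpr (.of_forall hK))

theorem tendsto_sub_rpow_mul_nhdsLT {f : ℝ → ℝ} {K α : ℝ} (hα : 0 < α)
    (hf : ∀ᶠ θ in 𝓝[<] t, |f θ| ≤ K * (t - θ)) :
    Tendsto (fun θ => (t - θ) ^ (α - 1) * f θ) (𝓝[<] t) (𝓝 0) := by
  have hlim : Tendsto (fun θ => K * (t - θ) ^ α) (𝓝[<] t) (𝓝 0) := by
    have : Tendsto (fun θ => K * (t - θ) ^ α) (𝓝 t) (𝓝 (K * (t - t) ^ α)) :=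
      ((continuous_const.sub continuous_id).rpow_const fun _ => Or.inr hα.le).const_mul K
        |>.tendsto t
    simpa [Real.zero_rpow hα.ne'] using this.mono_left nhdsWithin_le_nhds
  refine squeeze_zero_norm' ?_ hlim
  filter_upwards [hf, self_mem_nhdsWithin] with θ hθ hθt
  have hpos : 0 < t - θ := sub_pos.mpr hθt
  rw [norm_mul, Real.norm_of_nonneg (Real.rpow_nonneg hpos.le _), Real.norm_eq_abs]
  calc (t - θ) ^ (α - 1) * |f θ| ≤ (t - θ) ^ (α - 1) * (K * (t - θ)) := by gcongr
    _ = K * (t - θ) ^ α := by rw [Real.rpow_sub_one hpos.ne']; field_simp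

end Weight

section Icc

variable {F : Type*} [NormedAddCommGroup F] [NormedSpace ℝ F] {a t : ℝ}

theorem norm_sub_le_mul_sub_pow_of_norm_deriv_le {f f' : ℝ → F} {C x : ℝ} {k : ℕ}
    (hxt : x ≤ t) (hC : 0 ≤ C) (hf : ∀ y ∈ Icc x t, HasDerivAt f (f' y) y)
    (hf' : ∀ y ∈ Icc x t, ‖f' y‖ ≤ C * (t - y) ^ k) :
    ‖f x - f t‖ ≤ C * (t - x) ^ (k + 1) := by
  have hbound : ∀ y ∈ Icc x t, ‖f' y‖ ≤ C * (t - x) ^ k := fun y hy =>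
    (hf' y hy).trans (by gcongr <;> linarith [hy.1, hy.2])
  have := (convex_Icc x t).norm_image_sub_le_of_norm_hasDerivWithin_le
    (fun y hy => (hf y hy).hasDerivWithinAt) hbound (right_mem_Icc.mpr hxt) (left_mem_Icc.mpr hxt)
  rw [norm_sub_rev x t, Real.norm_of_nonneg (by linarith)] at this
  rwa [pow_succ, ← mul_assoc]

theorem exists_norm_le_sub_sq_of_contDiff {h : ℝ → F} (hh : ContDiff ℝ 2 h) (hat : a ≤ t)
    (ht : h t = 0) (hdt : deriv h t = 0) :
    ∃ N, ∀ θ ∈ Icc a t, ‖h θ‖ ≤ N * (t - θ) ^ 2 ∧ ‖deriv h θ‖ ≤ N * (t - θ) := by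
  have hh₁ : ContDiff ℝ 1 (deriv h) := hh.deriv'
  obtain ⟨N, hN⟩ := isCompact_Icc.exists_bound_of_continuousOn
    (hh₁.continuous_deriv le_rfl).continuousOn (s := Icc a t)
  have hN0 : 0 ≤ N := (norm_nonneg _).trans (hN a (left_mem_Icc.mpr hat))
  have hdh : ∀ θ ∈ Icc a t, ‖deriv h θ‖ ≤ N * (t - θ) := fun θ hθ => by
    simpa [hdt] using norm_sub_le_mul_sub_pow_of_norm_deriv_le (k := 0) hθ.2 hN0
      (fun y _ => (hh₁.differentiable one_ne_zero y).hasDerivAt)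
      (fun y hy => by simpa using hN y ⟨hθ.1.trans hy.1, hy.2⟩)
  refine ⟨N, fun θ hθ => ⟨?_, hdh θ hθ⟩⟩
  simpa [ht] using norm_sub_le_mul_sub_pow_of_norm_deriv_le (k := 1) hθ.2 hN0
    (fun y _ => (hh.differentiable two_ne_zero y).hasDerivAt)
    (fun y hy => by simpa using hdh y ⟨hθ.1.trans hy.1, hy.2⟩)

theorem ContDiffOn.hasDerivAt_derivWithin_Icc {f : ℝ → F} {n : WithTop ℕ∞}
    (hf : ContDiffOn ℝ n f (Icc a t)) (hn : n ≠ 0) {θ : ℝ} (hθ : θ ∈ Ioo a t) :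
    HasDerivAt f (derivWithin f (Icc a t) θ) θ := by
  rw [derivWithin_of_mem_nhds (Icc_mem_nhds hθ.1 hθ.2)]
  exact ((hf.differentiableOn hn).differentiableAt (Icc_mem_nhds hθ.1 hθ.2)).hasDerivAt

theorem eqOn_deriv_derivWithin_Icc {f g : ℝ → F} (hfg : EqOn f g (Ioo a t)) :
    EqOn (deriv f) (derivWithin g (Icc a t)) (Ioo a t) := fun θ hθ => by
  rw [hfg.deriv isOpen_Ioo hθ, derivWithin_of_mem_nhds (Icc_mem_nhds hθ.1 hθ.2)]

/-- One-sided derivatives keep the jet of a curve that is only `C⁴` on `[a, t]` continuous up to the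
endpoints. -/
noncomputable def secondJetWithin (q : ℝ → F) (s : Set ℝ) (θ : ℝ) : ℝ × F × F × F :=
  (θ, q θ, derivWithin q s θ, derivWithin (derivWithin q s) s θ)

theorem ContDiffOn.secondJetWithin_Icc {q : ℝ → F} {m n : WithTop ℕ∞}
    (hq : ContDiffOn ℝ n q (Icc a t)) (hat : a < t) (hmn : m + 2 ≤ n) :
    ContDiffOn ℝ m (secondJetWithin q (Icc a t)) (Icc a t) := by
  have hI := uniqueDiffOn_Icc hat
  have hq₁ := hq.derivWithin hI (m := m + 1) (by rwa [add_assoc, one_add_one_eq_two])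
  exact contDiffOn_id.prodMk ((hq.of_le (le_self_add.trans hmn)).prodMk
    ((hq₁.of_le le_self_add).prodMk (hq₁.derivWithin hI le_rfl)))

theorem eqOn_secondJetWithin_Icc (q : ℝ → F) :
    EqOn (fun θ => (θ, q θ, deriv q θ, deriv (deriv q) θ)) (secondJetWithin q (Icc a t))
      (Ioo a t) := fun θ hθ => by
  have hq₁ := eqOn_deriv_derivWithin_Icc (eqOn_refl q (Ioo a t))
  simp only [secondJetWithin, hq₁ hθ, eqOn_deriv_derivWithin_Icc hq₁ hθ]

end Icc

section ByParts

variable {F : Type*} [NormedAddCommGroup F] [InnerProductSpace ℝ F] {a t α : ℝ}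

theorem abs_inner_le_of_norm_smul_le {V v : F} {r M s : ℝ} (hr : 0 < r) (hV : ‖r • V‖ ≤ M)
    (hv : ‖v‖ ≤ s * r) : |⟪V, v⟫| ≤ M * s := by
  have hs : 0 ≤ s := nonneg_of_mul_nonneg_left ((norm_nonneg v).trans hv) hr
  calc |⟪V, v⟫| ≤ ‖V‖ * ‖v‖ := abs_real_inner_le_norm V v
    _ ≤ ‖V‖ * (s * r) := by gcongr
    _ = ‖r • V‖ * s := by rw [norm_smul, Real.norm_of_nonneg hr.le]; ring
    _ ≤ M * s := by gcongr

/-- With `w θ = (t - θ)^(α - 1)` this is `⟪w B, h⟫ + ⟪w C, h'⟫ - ⟪(w C)', h⟫`, the boundary term of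
`∫ ⟪w B, h'⟫ = -∫ ⟪(w B)', h⟫` and `∫ ⟪w C, h''⟫ = ∫ ⟪(w C)'', h⟫`. -/
noncomputable def fracBoundaryTerm (t α : ℝ) (B C C' h h' : ℝ → F) (θ : ℝ) : ℝ :=
  (t - θ) ^ (α - 1) * (⟪B θ - C' θ - ((1 - α) / (t - θ)) • C θ, h θ⟫ + ⟪C θ, h' θ⟫)

noncomputable def fracEulerLagrange (t α : ℝ) (A B B' C C' C'' : ℝ → F) (θ : ℝ) : F :=
  A θ - B' θ + C'' θ - (((1 - α) / (t - θ)) • (B θ - (2 : ℝ) • C' θ)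
    - ((1 - α) * (2 - α) / (t - θ) ^ 2) • C θ)

theorem hasDerivAt_fracBoundaryTerm {A B B' C C' C'' h h' h'' : ℝ → F} {θ : ℝ} (hθ : θ < t)
    (hB : HasDerivAt B (B' θ) θ) (hC : HasDerivAt C (C' θ) θ) (hC' : HasDerivAt C' (C'' θ) θ)
    (hh : HasDerivAt h (h' θ) θ) (hh' : HasDerivAt h' (h'' θ) θ) :
    HasDerivAt (fracBoundaryTerm t α B C C' h h')
      ((⟪A θ, h θ⟫ + ⟪B θ, h' θ⟫ + ⟪C θ, h'' θ⟫) * (t - θ) ^ (α - 1)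
        - ⟪fracEulerLagrange t α A B B' C C' C'' θ, h θ⟫ * (t - θ) ^ (α - 1)) θ := by
  have hpos : t - θ ≠ 0 := (sub_pos.mpr hθ).ne'
  have hc : HasDerivAt (fun s => (1 - α) / (t - s)) ((1 - α) / (t - θ) ^ 2) θ :=
    ((hasDerivAt_const θ (1 - α)).fun_div ((hasDerivAt_id θ).const_sub t) hpos).congr_deriv
      (by simp)
  refine ((hasDerivAt_sub_rpow (p := α - 1) hθ).mul
    ((((hB.sub hC').sub (hc.smul hC)).inner ℝ hh).add (hC.inner ℝ hh'))).congr_deriv ?_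
  simp only [fracEulerLagrange, Pi.add_apply, Pi.sub_apply, Pi.smul_apply', inner_add_left,
    inner_sub_left, inner_smul_left, RCLike.conj_to_real]
  field_simp
  ring

theorem tendsto_fracBoundaryTerm_nhdsGT {B C C' h h' : ℝ → F} (hat : a < t)
    (hB : ContinuousOn B (Icc a t)) (hC : ContinuousOn C (Icc a t))
    (hC' : ContinuousOn C' (Icc a t)) (hh : ContinuousOn h (Icc a t))
    (hh' : ContinuousOn h' (Icc a t)) (ha : h a = 0) (h'a : h' a = 0) :
    Tendsto (fracBoundaryTerm t α B C C' h h') (𝓝[>] a) (𝓝 0) := by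
  have hne : ∀ θ ∈ Ico a t, t - θ ≠ 0 := fun θ hθ => (sub_pos.mpr hθ.2).ne'
  have hw : ContinuousOn (fun θ => (t - θ) ^ (α - 1)) (Ico a t) :=
    (continuousOn_const.sub continuousOn_id).rpow_const fun θ hθ => Or.inl (hne θ hθ)
  have hc : ContinuousOn (fun θ => (1 - α) / (t - θ)) (Ico a t) :=
    continuousOn_const.div (continuousOn_const.sub continuousOn_id) hne
  have hcont : ContinuousOn (fracBoundaryTerm t α B C C' h h') (Ico a t) :=
    hw.mul ((((hB.sub hC').mono Ico_subset_Icc_self).sub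
      (hc.smul (hC.mono Ico_subset_Icc_self))).inner (hh.mono Ico_subset_Icc_self) |>.add
        ((hC.inner hh').mono Ico_subset_Icc_self))
  have h0 : fracBoundaryTerm t α B C C' h h' a = 0 := by simp [fracBoundaryTerm, ha, h'a]
  rw [← nhdsWithin_Ioo_eq_nhdsGT hat, ← h0]
  exact (hcont a ⟨le_rfl, hat⟩).mono Ioo_subset_Ico_self

theorem tendsto_fracBoundaryTerm_nhdsLT {B C C' h h' : ℝ → F} {N : ℝ} (hat : a < t)
    (hα : 0 < α) (hB : ContinuousOn B (Icc a t)) (hC : ContinuousOn C (Icc a t))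
    (hC' : ContinuousOn C' (Icc a t))
    (hN : ∀ θ ∈ Icc a t, ‖h θ‖ ≤ N * (t - θ) ^ 2 ∧ ‖h' θ‖ ≤ N * (t - θ)) :
    Tendsto (fracBoundaryTerm t α B C C' h h') (𝓝[<] t) (𝓝 0) := by
  obtain ⟨K₁, hK₁⟩ := isCompact_Icc.exists_bound_of_continuousOn
    (f := fun θ => (t - θ) • (B θ - C' θ) - (1 - α) • C θ)
    ((continuousOn_const.sub continuousOn_id).smul (hB.sub hC') |>.sub (hC.const_smul (1 - α)))
  obtain ⟨K₂, hK₂⟩ := isCompact_Icc.exists_bound_of_continuousOn hC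
  refine tendsto_sub_rpow_mul_nhdsLT (K := K₁ * N + K₂ * N) hα ?_
  filter_upwards [Ioo_mem_nhdsLT hat] with θ hθ
  have hθ' := Ioo_subset_Icc_self hθ
  have hpos : 0 < t - θ := sub_pos.mpr hθ.2
  -- the singular coefficient `(1 - α)/(t - θ)` is absorbed by one factor `t - θ` of `h`
  have hX : ‖(t - θ) • (B θ - C' θ - ((1 - α) / (t - θ)) • C θ)‖ ≤ K₁ := by
    have : (t - θ) • (B θ - C' θ - ((1 - α) / (t - θ)) • C θ) =
        (t - θ) • (B θ - C' θ) - (1 - α) • C θ := by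
      match_scalars <;> field_simp
    exact this ▸ hK₁ θ hθ'
  have h₁ := abs_inner_le_of_norm_smul_le hpos hX
    ((hN θ hθ').1.trans_eq (by ring : N * (t - θ) ^ 2 = N * (t - θ) * (t - θ)))
  have h₂ : |⟪C θ, h' θ⟫| ≤ K₂ * (N * (t - θ)) := (abs_real_inner_le_norm _ _).trans
    (mul_le_mul (hK₂ θ hθ') (hN θ hθ').2 (norm_nonneg _) ((norm_nonneg _).trans (hK₂ θ hθ')))
  calc |⟪B θ - C' θ - ((1 - α) / (t - θ)) • C θ, h θ⟫ + ⟪C θ, h' θ⟫|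
      ≤ K₁ * (N * (t - θ)) + K₂ * (N * (t - θ)) := (abs_add_le _ _).trans (add_le_add h₁ h₂)
    _ = (K₁ * N + K₂ * N) * (t - θ) := by ring

theorem intervalIntegrable_inner_fracEulerLagrange_mul {A B B' C C' C'' h : ℝ → F} {N : ℝ}
    (hat : a < t) (hα : 0 < α) (hA : ContinuousOn A (Icc a t)) (hB : ContinuousOn B (Icc a t))
    (hB' : ContinuousOn B' (Icc a t)) (hC : ContinuousOn C (Icc a t))
    (hC' : ContinuousOn C' (Icc a t)) (hC'' : ContinuousOn C'' (Icc a t)) (hh : Continuous h)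
    (hN : ∀ θ ∈ Icc a t, ‖h θ‖ ≤ N * (t - θ) ^ 2) :
    IntervalIntegrable (fun θ => ⟪fracEulerLagrange t α A B B' C C' C'' θ, h θ⟫ *
      (t - θ) ^ (α - 1)) volume a t := by
  obtain ⟨K, hK⟩ := isCompact_Icc.exists_bound_of_continuousOn (f := fun θ =>
      (t - θ) ^ 2 • (A θ - B' θ + C'' θ) - ((1 - α) * (t - θ)) • (B θ - (2 : ℝ) • C' θ)
        + ((1 - α) * (2 - α)) • C θ)
    ((((continuousOn_const.sub continuousOn_id).pow 2).smul ((hA.sub hB').add hC'')).sub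
      ((continuousOn_const.mul (continuousOn_const.sub continuousOn_id)).smul
        (hB.sub (hC'.const_smul (2 : ℝ)))) |>.add (hC.const_smul ((1 - α) * (2 - α))))
  have hne : ∀ θ ∈ Ioo a t, t - θ ≠ 0 := fun θ hθ => (sub_pos.mpr hθ.2).ne'
  have hsub : ContinuousOn (fun θ => t - θ) (Ioo a t) := continuousOn_const.sub continuousOn_id
  refine intervalIntegrable_mul_sub_rpow (K := K * N) (by linarith) hat.le ?_ fun θ hθ => ?_
  · exact ((((hA.sub hB').add hC'').mono Ioo_subset_Icc_self).sub
      (((continuousOn_const.div hsub hne).smul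
        ((hB.sub (hC'.const_smul (2 : ℝ))).mono Ioo_subset_Icc_self)).sub
      ((continuousOn_const.div (hsub.pow 2) fun θ hθ => pow_ne_zero 2 (hne θ hθ)).smul
        (hC.mono Ioo_subset_Icc_self)))).inner hh.continuousOn
  · have hθ' := Ioo_subset_Icc_self hθ
    have hθt := hne θ hθ
    -- the singular coefficients are absorbed by the factor `(t - θ)²` of `h`
    refine abs_inner_le_of_norm_smul_le (pow_pos (sub_pos.mpr hθ.2) 2) ?_
      ((hN θ hθ').trans_eq (by ring))
    have : (t - θ) ^ 2 • fracEulerLagrange t α A B B' C C' C'' θ =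
        (t - θ) ^ 2 • (A θ - B' θ + C'' θ) - ((1 - α) * (t - θ)) • (B θ - (2 : ℝ) • C' θ)
          + ((1 - α) * (2 - α)) • C θ := by
      simp only [fracEulerLagrange]
      match_scalars <;> field_simp
    exact this ▸ hK θ hθ'

theorem integral_inner_mul_sub_rpow_eq_integral_fracEulerLagrange {A B C h : ℝ → F}
    (hat : a < t) (hα : 0 < α) (hA : ContinuousOn A (Icc a t))
    (hB : ContDiffOn ℝ 1 B (Icc a t)) (hC : ContDiffOn ℝ 2 C (Icc a t)) (hh : ContDiff ℝ 2 h)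
    (ha : h a = 0) (ht : h t = 0) (hda : deriv h a = 0) (hdt : deriv h t = 0) :
    ∫ θ in a..t, (⟪A θ, h θ⟫ + ⟪B θ, deriv h θ⟫ + ⟪C θ, deriv (deriv h) θ⟫) * (t - θ) ^ (α - 1) =
      ∫ θ in a..t, ⟪fracEulerLagrange t α A B (derivWithin B (Icc a t)) C
        (derivWithin C (Icc a t)) (derivWithin (derivWithin C (Icc a t)) (Icc a t)) θ, h θ⟫ *
          (t - θ) ^ (α - 1) := by
  have hI := uniqueDiffOn_Icc hat
  have hC' : ContDiffOn ℝ 1 (derivWithin C (Icc a t)) (Icc a t) := hC.derivWithin hI le_rfl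
  have hh₁ : ContDiff ℝ 1 (deriv h) := hh.deriv'
  obtain ⟨N, hN⟩ := exists_norm_le_sub_sq_of_contDiff hh hat.le ht hdt
  have hg : IntervalIntegrable (fun θ => (⟪A θ, h θ⟫ + ⟪B θ, deriv h θ⟫
      + ⟪C θ, deriv (deriv h) θ⟫) * (t - θ) ^ (α - 1)) volume a t :=
    (intervalIntegrable_sub_rpow (by linarith)).continuousOn_mul <| by
      rw [uIcc_of_le hat.le]
      exact ((hA.inner hh.continuous.continuousOn).add
        (hB.continuousOn.inner hh₁.continuous.continuousOn)).add
        (hC.continuousOn.inner (hh₁.continuous_deriv le_rfl).continuousOn)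
  have hψ := intervalIntegrable_inner_fracEulerLagrange_mul hat hα hA hB.continuousOn
    (hB.continuousOn_derivWithin hI le_rfl) hC.continuousOn hC'.continuousOn
    (hC'.continuousOn_derivWithin hI le_rfl) hh.continuous (fun θ hθ => (hN θ hθ).1)
  have hFTC := intervalIntegral.integral_eq_sub_of_hasDerivAt_of_tendsto hat
    (fun θ hθ => hasDerivAt_fracBoundaryTerm (A := A) hθ.2
      (hB.hasDerivAt_derivWithin_Icc one_ne_zero hθ) (hC.hasDerivAt_derivWithin_Icc two_ne_zero hθ)
      (hC'.hasDerivAt_derivWithin_Icc one_ne_zero hθ) (hh.differentiable two_ne_zero θ).hasDerivAt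
      (hh₁.differentiable one_ne_zero θ).hasDerivAt) (hg.sub hψ)
    (tendsto_fracBoundaryTerm_nhdsGT hat hB.continuousOn hC.continuousOn hC'.continuousOn
      hh.continuous.continuousOn hh₁.continuous.continuousOn ha hda)
    (tendsto_fracBoundaryTerm_nhdsLT hat hα hB.continuousOn hC.continuousOn hC'.continuousOn hN)
  rwa [intervalIntegral.integral_sub hg hψ, sub_self, sub_eq_zero] at hFTC

end ByParts

open Lagrangian in
theorem falva_second_order_first_variation_general
    (n : ℕ) (a t α : ℝ) (hat : a < t) (hα0 : 0 < α)
    (L : ℝ × EuclideanSpace ℝ (Fin n) × EuclideanSpace ℝ (Fin n) ×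
          EuclideanSpace ℝ (Fin n) → ℝ)
    (hL : ContDiff ℝ 4 L)
    (q : ℝ → EuclideanSpace ℝ (Fin n))
    (hq : ContDiffOn ℝ 4 q (Set.Icc a t)) :
    ∀ h : ℝ → EuclideanSpace ℝ (Fin n),
      ContDiff ℝ 4 h → h a = 0 → h t = 0 → deriv h a = 0 → deriv h t = 0 →
      HasDerivAt (fun ε : ℝ => (1 / Real.Gamma α) *
          ∫ θ in a..t,
            L (θ, q θ + ε • h θ, deriv q θ + ε • deriv h θ,
                deriv (deriv q) θ + ε • deriv (deriv h) θ) * (t - θ) ^ (α - 1))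
        ((1 / Real.Gamma α) *
          ∫ θ in a..t,
            ⟪gradient (fun y => L (θ, y, deriv q θ, deriv (deriv q) θ)) (q θ)
                - deriv (fun s =>
                    gradient (fun v => L (s, q s, v, deriv (deriv q) s)) (deriv q s)) θ
                + deriv (deriv (fun s =>
                    gradient (fun w => L (s, q s, deriv q s, w)) (deriv (deriv q) s))) θ
                - (((1 - α) / (t - θ)) •
                      (gradient (fun v => L (θ, q θ, v, deriv (deriv q) θ)) (deriv q θ)
                        - (2 : ℝ) • deriv (fun s =>
                            gradient (fun w => L (s, q s, deriv q s, w))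
                              (deriv (deriv q) s)) θ)
                    - ((1 - α) * (2 - α) / (t - θ) ^ 2) •
                        gradient (fun w => L (θ, q θ, deriv q θ, w)) (deriv (deriv q) θ)),
              h θ⟫ * (t - θ) ^ (α - 1))
        0 := by
  intro h hh hha hht hdha hdht
  have hL₁ : Differentiable ℝ L := hL.differentiable (by norm_num)
  have hP := eqOn_secondJetWithin_Icc (a := a) (t := t) q
  set P := secondJetWithin q (Icc a t)
  have hPs : ContDiffOn ℝ 2 P (Icc a t) := hq.secondJetWithin_Icc hat (by norm_num)
  have hh₂ : ContDiff ℝ 2 h := hh.of_le (by norm_num)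
  have hh₁ : ContDiff ℝ 1 (deriv h) := hh₂.deriv'
  have hvar := hasDerivAt_integral_comp_add_smul_mul (hL.of_le (by norm_num))
    ((uIcc_of_le hat.le).symm ▸ hPs.continuousOn)
    (H := fun θ => ((0 : ℝ), h θ, deriv h θ, deriv (deriv h) θ)) (Continuous.continuousOn <|
      continuous_const.prodMk (hh.continuous.prodMk
        (hh₁.continuous.prodMk (hh₁.continuous_deriv le_rfl))))
    (intervalIntegrable_sub_rpow (a := a) (t := t) (p := α - 1) (by linarith))
  have hgrad (ι : EuclideanSpace ℝ (Fin n) →L[ℝ] _) :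
      ContDiffOn ℝ 2 (fun θ => partialGradient L ι (P θ)) (Icc a t) :=
    (hL.partialGradient (by norm_num) ι).comp_contDiffOn hPs
  have hibp := integral_inner_mul_sub_rpow_eq_integral_fracEulerLagrange hat hα0
    (hgrad ι₂).continuousOn ((hgrad ι₃).of_le (by norm_num)) (hgrad ι₄) hh₂ hha hht hdha hdht
  have hD (ι : EuclideanSpace ℝ (Fin n) →L[ℝ] _) :
      EqOn (deriv fun s => partialGradient L ι (s, q s, deriv q s, deriv (deriv q) s))
        (derivWithin (fun s => partialGradient L ι (P s)) (Icc a t)) (Ioo a t) :=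
    eqOn_deriv_derivWithin_Icc fun s hs => congrArg _ (hP hs)
  refine (hvar.const_mul (1 / Real.Gamma α)).congr_of_eventuallyEq (.of_forall fun ε => ?_)
    |>.congr_deriv ?_
  · congr 1
    refine intervalIntegral.integral_congr_Ioo_of_le hat.le fun θ hθ => ?_
    simp only [← hP hθ, Prod.smul_mk, Prod.mk_add_mk, smul_zero, add_zero]
  · congr 1
    refine (intervalIntegral.integral_congr fun θ _ => ?_).trans
      (hibp.trans (intervalIntegral.integral_congr_Ioo_of_le hat.le fun θ hθ => ?_))
    · exact congrArg (· * _) (fderiv_apply_eq_sum_inner_partialGradient _ _ _ _)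
    -- on `(a, t)` the gradients in the statement are the partial gradients along the jet `P`
    · simp only [gradient_eq_partialGradient₂ hL₁, gradient_eq_partialGradient₃ hL₁,
        gradient_eq_partialGradient₄ hL₁]
      rw [hD ι₃ hθ, eqOn_deriv_derivWithin_Icc (hD ι₄) hθ, hD ι₄ hθ,
        show (θ, q θ, deriv q θ, deriv (deriv q) θ) = P θ from hP hθ]
      rfl

/-- **First variation of the second-order FALVA functional.**
For every `C⁴` variation `h` with `h(a) = h(t) = 0` and `h'(a) = h'(t) = 0`, the
derivative at `ε = 0` of
`ε ↦ (1/Γ(α)) ∫_a^t L(θ, q+εh, q'+εh', q''+εh'') (t-θ)^(α-1) dθ` equals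
`(1/Γ(α)) ∫_a^t ⟨∂₂L - d/dθ ∂₃L + d²/dθ² ∂₄L
  - (((1-α)/(t-θ))(∂₃L - 2 d/dθ ∂₄L) - ((1-α)(2-α)/(t-θ)²) ∂₄L), h(θ)⟩ (t-θ)^(α-1) dθ`. -/
theorem falva_second_order_first_variation
    (n : ℕ) (hn : 1 ≤ n) (a t α : ℝ) (hat : a < t) (hα0 : 0 < α) (hα1 : α ≤ 1)
    (L : ℝ × EuclideanSpace ℝ (Fin n) × EuclideanSpace ℝ (Fin n) ×
          EuclideanSpace ℝ (Fin n) → ℝ)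
    (hL : ContDiff ℝ 4 L)
    (q : ℝ → EuclideanSpace ℝ (Fin n))
    (hq : ContDiffOn ℝ 4 q (Set.Icc a t)) :
    ∀ h : ℝ → EuclideanSpace ℝ (Fin n),
      ContDiff ℝ 4 h → h a = 0 → h t = 0 → deriv h a = 0 → deriv h t = 0 →
      HasDerivAt (fun ε : ℝ => (1 / Real.Gamma α) *
          ∫ θ in a..t,
            L (θ, q θ + ε • h θ, deriv q θ + ε • deriv h θ,
                deriv (deriv q) θ + ε • deriv (deriv h) θ) * (t - θ) ^ (α - 1))
        ((1 / Real.Gamma α) *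
          ∫ θ in a..t,
            ⟪gradient (fun y => L (θ, y, deriv q θ, deriv (deriv q) θ)) (q θ)
                - deriv (fun s =>
                    gradient (fun v => L (s, q s, v, deriv (deriv q) s)) (deriv q s)) θ
                + deriv (deriv (fun s =>
                    gradient (fun w => L (s, q s, deriv q s, w)) (deriv (deriv q) s))) θ
                - (((1 - α) / (t - θ)) •
                      (gradient (fun v => L (θ, q θ, v, deriv (deriv q) θ)) (deriv q θ)
                        - (2 : ℝ) • deriv (fun s =>
                            gradient (fun w => L (s, q s, deriv q s, w))
                              (deriv (deriv q) s)) θ)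
                    - ((1 - α) * (2 - α) / (t - θ) ^ 2) •
                        gradient (fun w => L (θ, q θ, deriv q θ, w)) (deriv (deriv q) θ)),
              h θ⟫ * (t - θ) ^ (α - 1))
        0 :=
  falva_second_order_first_variation_general n a t α hat hα0 L hL q hq
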